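/- Let 1/2 < g < 3/2 with g ≠ 1, and let μ > 0 with J_{1/2−g}(μ) ≠ 0. Then ∫₀¹ G_N(x,x;μ²) dx = J_{3/2−g}(μ) / (2μ J_{1/2−g}(μ)), where G_N(x,x;μ²) = γ_N(μ) · x · ( −J_{g−1/2}(μ) J_{1/2−g}(μx)² + J_{1/2−g}(μ) J_{1/2−g}(μx) J_{g−1/2}(μx) ) and γ_N(μ) = π / (2 cos(gπ) J_{1/2−g}(μ)). -/

import Mathlib

/-!
Write `J_ν(z) = (z/2)^ν Λ_ν(z)` with `Λ_ν = besselEntire ν` entire, so that the recurrence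
`Λ_{ν-1} + (z/2)² Λ_{ν+1} = ν Λ_ν` and `Λ_ν' = -(z/2) Λ_{ν+1}` are identities of power series.
With `ν = g - 1/2` and `z = μx` the integral splits into Lommel's integrals
`∫₀^μ z J_σ² = μ²/2 (J_σ² + J_{σ+1}²) - σ μ J_σ J_{σ+1}` (at `σ = -ν`) and
`∫₀^μ z J_{-ν} J_ν = μ²/2 (J_{-ν} J_ν + J_{1-ν} J_{ν+1})`, whose primitives are continuous at `0`
once written through `Λ`. The combination then collapses by the Wronskian-type identity
`ν J_ν J_{-ν} + z/2 (J_ν J_{1-ν} - J_{ν+1} J_{-ν}) = sin(νπ)/π`: its `Λ`-form has zero derivative,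
and its value at `0` is `ν / (Γ(1+ν) Γ(1-ν))`.
-/

open MeasureTheory Set

/-- Bessel function of the first kind of order `ν`, defined by its power series. -/
noncomputable def besselJ (ν x : ℝ) : ℝ :=
  ∑' m : ℕ, ((-1 : ℝ) ^ m / (m.factorial * Real.Gamma (m + ν + 1))) *
    (x / 2) ^ (2 * m) * (x / 2) ^ ν

open Real Filter

-- At a pole of `Γ` the coefficient is `(-1) ^ m / 0 = 0`, the value of `1 / Γ` there, so the
-- identities below hold for every real order.
noncomputable def besselCoeff (ν : ℝ) (m : ℕ) : ℝ :=
  (-1) ^ m / (m.factorial * Gamma (m + ν + 1))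

noncomputable def besselEntire (ν z : ℝ) : ℝ :=
  ∑' m : ℕ, besselCoeff ν m * ((z / 2) ^ 2) ^ m

theorem besselJ_eq_besselEntire_mul (ν z : ℝ) :
    besselJ ν z = besselEntire ν z * (z / 2) ^ ν := by
  simp only [besselJ, besselEntire, besselCoeff, ← tsum_mul_right, pow_mul]

theorem besselCoeff_add_one (ν : ℝ) (m : ℕ) :
    besselCoeff (ν + 1) m = -(m + 1) * besselCoeff ν (m + 1) := by
  have hm : (m : ℝ) + 1 ≠ 0 := by positivity
  simp only [besselCoeff, Nat.factorial_succ, Nat.cast_mul, Nat.cast_succ, pow_succ,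
    show (m : ℝ) + 1 + ν + 1 = m + (ν + 1) + 1 by ring]
  rw [mul_assoc ((m:ℝ) + 1), ← mul_div_mul_left _ _ hm]
  ring

theorem besselCoeff_sub_one (ν : ℝ) (m : ℕ) :
    besselCoeff (ν - 1) m = (m + ν) * besselCoeff ν m := by
  rcases eq_or_ne ((m : ℝ) + ν) 0 with h | h
  · simp [besselCoeff, show (m : ℝ) + (ν - 1) + 1 = m + ν by ring, h]
  · simp only [besselCoeff, show (m : ℝ) + (ν - 1) + 1 = m + ν by ring, Gamma_add_one h]
    rw [mul_left_comm, ← mul_div_mul_left _ _ h]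
    ring

theorem besselCoeff_eq_neg_mul_succ (ν : ℝ) (m : ℕ) :
    besselCoeff ν m = -((m + 1) * (m + ν + 1)) * besselCoeff ν (m + 1) := by
  have := besselCoeff_sub_one (ν + 1) m
  rw [add_sub_cancel_right, besselCoeff_add_one] at this
  rw [this]; ring

theorem summable_besselCoeff_mul_pow (ν t : ℝ) :
    Summable fun m => besselCoeff ν m * t ^ m := by
  refine summable_of_ratio_norm_eventually_le one_half_lt_one ?_
  filter_upwards [eventually_ge_atTop ⌈|ν + 1| + 2 * ‖t‖⌉₊] with m hm
  have hm' : |ν + 1| + 2 * ‖t‖ ≤ m := Nat.ceil_le.mp hm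
  have hν : 2 * ‖t‖ ≤ m + ν + 1 := by linarith [neg_abs_le (ν + 1)]
  have hratio : 2 * ‖t‖ ≤ ‖((m : ℝ) + 1) * (m + ν + 1)‖ := by
    rw [Real.norm_of_nonneg (by nlinarith [norm_nonneg t] : (0 : ℝ) ≤ (m + 1) * (m + ν + 1))]
    nlinarith [norm_nonneg t, (Nat.cast_nonneg m : (0 : ℝ) ≤ m)]
  have hX : 0 ≤ ‖besselCoeff ν (m + 1)‖ * ‖t‖ ^ m := by positivity
  rw [besselCoeff_eq_neg_mul_succ ν m, norm_mul, norm_mul, norm_mul, norm_neg, norm_pow, norm_pow,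
    pow_succ]
  nlinarith [mul_le_mul_of_nonneg_left hratio hX]

theorem hasDerivAt_tsum_mul_pow {c : ℕ → ℝ} (hc : ∀ t, Summable fun m => c m * t ^ m) (t : ℝ) :
    HasDerivAt (fun t => ∑' m, c m * t ^ m) (∑' m, (m + 1) * c (m + 1) * t ^ m) t := by
  set R := |t| + 1
  have hR : 0 < R := by positivity
  have ht : t ∈ Metric.ball (0 : ℝ) R := by simp [R]
  -- `m ≤ 2 ^ m` trades the factor `m` of the derivative for doubling the radius.
  have hbound : ∀ m, ∀ s ∈ Metric.ball (0 : ℝ) R,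
      ‖c m * (m * s ^ (m - 1))‖ ≤ ‖c m * (2 * R) ^ m‖ / R := by
    rintro (_ | k) s hs
    · simp only [CharP.cast_eq_zero, zero_mul, mul_zero, norm_zero]
      positivity
    · rw [mem_ball_zero_iff] at hs
      have hk : ((k + 1 : ℕ) : ℝ) ≤ 2 ^ (k + 1) := by exact_mod_cast (Nat.lt_two_pow_self).le
      rw [norm_mul (c _) ((2 * R) ^ _), mul_div_assoc, norm_mul]
      gcongr
      rw [norm_mul, norm_pow, norm_pow, Real.norm_of_nonneg (by positivity : 0 ≤ 2 * R),
        RCLike.norm_natCast, Nat.add_sub_cancel, mul_pow, pow_succ R]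
      calc ((k + 1 : ℕ) : ℝ) * ‖s‖ ^ k ≤ 2 ^ (k + 1) * R ^ k := by gcongr
        _ = 2 ^ (k + 1) * (R ^ k * R) / R := by field_simp
  have hsum : Summable fun m => ‖c m * (2 * R) ^ m‖ / R := (hc (2 * R)).norm.div_const R
  have hderiv := hasDerivAt_tsum_of_isPreconnected hsum Metric.isOpen_ball
    (convex_ball 0 R).isPreconnected (fun m s _ => (hasDerivAt_pow m s).const_mul (c m)) hbound
    (Metric.mem_ball_self hR) (hc 0) ht
  have hsum' : Summable fun m => c m * (m * t ^ (m - 1)) :=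
    .of_norm_bounded hsum fun m => hbound m t ht
  refine hderiv.congr_deriv ?_
  rw [hsum'.tsum_eq_zero_add]
  simp only [CharP.cast_eq_zero, zero_mul, mul_zero, zero_add, Nat.add_sub_cancel, Nat.cast_succ]
  exact tsum_congr fun m => by ring

theorem hasDerivAt_div_two_sq (z : ℝ) : HasDerivAt (fun z : ℝ => (z / 2) ^ 2) (z / 2) z :=
  (((hasDerivAt_id' z).div_const 2).fun_pow 2).congr_deriv (by norm_num; ring)

theorem hasDerivAt_besselEntire (ν z : ℝ) :
    HasDerivAt (besselEntire ν) (-(z / 2) * besselEntire (ν + 1) z) z := by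
  refine ((hasDerivAt_tsum_mul_pow (summable_besselCoeff_mul_pow ν) _).comp z
    (hasDerivAt_div_two_sq z)).congr_deriv ?_
  simp only [besselEntire, besselCoeff_add_one, neg_mul, tsum_neg]
  ring

theorem continuous_besselEntire (ν : ℝ) : Continuous (besselEntire ν) :=
  continuous_iff_continuousAt.2 fun z => (hasDerivAt_besselEntire ν z).continuousAt

theorem besselEntire_zero (ν : ℝ) : besselEntire ν 0 = (Gamma (ν + 1))⁻¹ := by
  rw [besselEntire, tsum_eq_single 0 fun m hm => by simp [hm]]
  simp [besselCoeff]

theorem besselEntire_sub_one_add (ν z : ℝ) :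
    besselEntire (ν - 1) z + (z / 2) ^ 2 * besselEntire (ν + 1) z = ν * besselEntire ν z := by
  set t := (z / 2) ^ 2
  set f : ℕ → ℝ := fun m => -(m * besselCoeff ν m * t ^ m)
  have hf : ∀ m, f (m + 1) = t * (besselCoeff (ν + 1) m * t ^ m) := fun m => by
    simp only [f, besselCoeff_add_one, pow_succ, Nat.cast_succ]
    ring
  have hf' : Summable fun m => f (m + 1) := by
    simpa only [hf] using (summable_besselCoeff_mul_pow (ν + 1) t).mul_left t
  have hshift : t * besselEntire (ν + 1) z = ∑' m, f m := by
    rw [tsum_eq_zero_add' hf', besselEntire, ← tsum_mul_left]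
    simp only [hf, f, CharP.cast_eq_zero, zero_mul, neg_zero, zero_add]
    rfl
  rw [hshift, besselEntire, besselEntire,
    ← (summable_besselCoeff_mul_pow (ν - 1) t).tsum_add ((summable_nat_add_iff 1).mp hf'),
    ← tsum_mul_left]
  exact tsum_congr fun m => by simp only [f, besselCoeff_sub_one]; ring

theorem besselJ_mul_besselJ {z : ℝ} (hz : 0 < z) (a b : ℝ) :
    besselJ a z * besselJ b z = besselEntire a z * besselEntire b z * (z / 2) ^ (a + b) := by
  rw [besselJ_eq_besselEntire_mul, besselJ_eq_besselEntire_mul, rpow_add (by positivity)]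
  ring

theorem besselEntire_wronskian (ν z : ℝ) :
    ν * (besselEntire ν z * besselEntire (-ν) z) + (z / 2) ^ 2 *
      (besselEntire ν z * besselEntire (-ν + 1) z - besselEntire (ν + 1) z * besselEntire (-ν) z)
      = sin (π * ν) / π := by
  have hderiv : ∀ x, HasDerivAt (fun x => ν * (besselEntire ν x * besselEntire (-ν) x) +
      (x / 2) ^ 2 * (besselEntire ν x * besselEntire (-ν + 1) x -
        besselEntire (ν + 1) x * besselEntire (-ν) x)) 0 x := fun x => by
    have hq := hasDerivAt_besselEntire ν x
    have hp := hasDerivAt_besselEntire (-ν) x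
    have hr := hasDerivAt_besselEntire (-ν + 1) x
    have hs := hasDerivAt_besselEntire (ν + 1) x
    have hrec₁ := besselEntire_sub_one_add (-ν + 1) x
    have hrec₂ := besselEntire_sub_one_add (ν + 1) x
    rw [add_sub_cancel_right] at hrec₁ hrec₂
    refine (((hq.fun_mul hp).const_mul ν).fun_add
      ((hasDerivAt_div_two_sq x).fun_mul ((hq.fun_mul hr).fun_sub (hs.fun_mul hp)))).congr_deriv ?_
    linear_combination (-(x / 2) * besselEntire ν x) * hrec₁ + (x / 2 * besselEntire (-ν) x) * hrec₂
  rw [is_const_of_deriv_eq_zero (fun x => (hderiv x).differentiableAt) (fun x => (hderiv x).deriv)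
    z 0, zero_div, zero_pow two_ne_zero, zero_mul, add_zero, besselEntire_zero, besselEntire_zero]
  rcases eq_or_ne ν 0 with rfl | hν
  · simp
  rw [Gamma_add_one hν, neg_add_eq_sub, mul_inv, mul_assoc, ← mul_assoc ν, mul_inv_cancel₀ hν,
    one_mul, ← mul_inv, Gamma_mul_Gamma_one_sub, inv_div]

theorem besselJ_wronskian {z : ℝ} (hz : 0 < z) (ν : ℝ) :
    ν * (besselJ ν z * besselJ (-ν) z) + z / 2 *
      (besselJ ν z * besselJ (-ν + 1) z - besselJ (ν + 1) z * besselJ (-ν) z)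
      = sin (π * ν) / π := by
  rw [besselJ_mul_besselJ hz, besselJ_mul_besselJ hz, besselJ_mul_besselJ hz, add_neg_cancel,
    show ν + (-ν + 1) = 1 by ring, show ν + 1 + -ν = 1 by ring, rpow_zero, rpow_one,
    ← besselEntire_wronskian ν z]
  ring

noncomputable def besselJSqPrimitive (σ z : ℝ) : ℝ :=
  2 * (z / 2) ^ (2 * σ + 2) * (besselEntire σ z ^ 2 - σ * besselEntire σ z * besselEntire (σ + 1) z
    + (z / 2) ^ 2 * besselEntire (σ + 1) z ^ 2)

theorem continuous_besselJSqPrimitive {σ : ℝ} (hσ : -1 < σ) :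
    Continuous (besselJSqPrimitive σ) := by
  have hpow : Continuous fun z : ℝ => (z / 2) ^ (2 * σ + 2) :=
    (continuous_rpow_const (by linarith)).comp (continuous_id.div_const 2)
  have := continuous_besselEntire σ
  have := continuous_besselEntire (σ + 1)
  unfold besselJSqPrimitive
  fun_prop

theorem besselJSqPrimitive_zero {σ : ℝ} (hσ : -1 < σ) : besselJSqPrimitive σ 0 = 0 := by
  simp [besselJSqPrimitive, zero_rpow (by linarith : 2 * σ + 2 ≠ 0)]

theorem besselJSqPrimitive_eq {z : ℝ} (hz : 0 < z) (σ : ℝ) :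
    besselJSqPrimitive σ z = z ^ 2 / 2 * (besselJ σ z ^ 2 + besselJ (σ + 1) z ^ 2)
      - σ * z * (besselJ σ z * besselJ (σ + 1) z) := by
  have hz2 : 0 < z / 2 := by positivity
  rw [sq (besselJ σ z), sq (besselJ (σ + 1) z), besselJ_mul_besselJ hz, besselJ_mul_besselJ hz,
    besselJ_mul_besselJ hz, besselJSqPrimitive, show σ + 1 + (σ + 1) = 2 * σ + 2 by ring,
    show σ + (σ + 1) = 2 * σ + 1 by ring, ← two_mul, rpow_add hz2 _ 2, rpow_two,
    rpow_add_one hz2.ne']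
  ring

theorem hasDerivAt_besselJSqPrimitive {z : ℝ} (hz : 0 < z) (σ : ℝ) :
    HasDerivAt (besselJSqPrimitive σ) (z * besselJ σ z ^ 2) z := by
  have hz2 : 0 < z / 2 := by positivity
  have hu := ((hasDerivAt_id' z).div_const 2).rpow_const (p := 2 * σ + 2) (Or.inl hz2.ne')
  have hp := hasDerivAt_besselEntire σ z
  have hr := hasDerivAt_besselEntire (σ + 1) z
  have hrec := besselEntire_sub_one_add (σ + 1) z
  rw [add_sub_cancel_right] at hrec
  refine ((hu.const_mul 2).fun_mul (((hp.fun_pow 2).fun_sub ((hp.const_mul σ).fun_mul hr)).fun_add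
    ((hasDerivAt_div_two_sq z).fun_mul (hr.fun_pow 2)))).congr_deriv ?_
  rw [sq (besselJ σ z), besselJ_mul_besselJ hz, show 2 * σ + 2 - 1 = 2 * σ + 1 by ring,
    rpow_add_one hz2.ne', ← two_mul, rpow_add hz2 _ 2, rpow_two]
  linear_combination (2 * (z / 2) ^ (2 * σ) * (z / 2) *
    (σ * besselEntire σ z - 2 * (z / 2) ^ 2 * besselEntire (σ + 1) z)) * hrec

noncomputable def besselJCrossPrimitive (σ z : ℝ) : ℝ :=
  z ^ 2 / 2 * (besselEntire (-σ) z * besselEntire σ z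
    + (z / 2) ^ 2 * (besselEntire (-σ + 1) z * besselEntire (σ + 1) z))

theorem hasDerivAt_besselJCrossPrimitive (σ z : ℝ) :
    HasDerivAt (besselJCrossPrimitive σ) (z * (besselEntire (-σ) z * besselEntire σ z)) z := by
  have hp := hasDerivAt_besselEntire (-σ) z
  have hq := hasDerivAt_besselEntire σ z
  have hr := hasDerivAt_besselEntire (-σ + 1) z
  have hs := hasDerivAt_besselEntire (σ + 1) z
  have hrec₁ := besselEntire_sub_one_add (-σ + 1) z
  have hrec₂ := besselEntire_sub_one_add (σ + 1) z
  rw [add_sub_cancel_right] at hrec₁ hrec₂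
  have hz : HasDerivAt (fun z : ℝ => z ^ 2 / 2) z z :=
    ((hasDerivAt_pow 2 z).div_const 2).congr_deriv (by norm_num)
  refine (hz.fun_mul ((hp.fun_mul hq).fun_add
    ((hasDerivAt_div_two_sq z).fun_mul (hr.fun_mul hs)))).congr_deriv ?_
  linear_combination (-2 * (z / 2) ^ 3 * besselEntire (σ + 1) z) * hrec₁
    - (2 * (z / 2) ^ 3 * besselEntire (-σ + 1) z) * hrec₂

theorem besselJCrossPrimitive_eq {z : ℝ} (hz : 0 < z) (σ : ℝ) :
    besselJCrossPrimitive σ z = z ^ 2 / 2 *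
      (besselJ (-σ) z * besselJ σ z + besselJ (-σ + 1) z * besselJ (σ + 1) z) := by
  rw [besselJ_mul_besselJ hz, besselJ_mul_besselJ hz, neg_add_cancel,
    show -σ + 1 + (σ + 1) = 2 by ring, rpow_zero, rpow_two, besselJCrossPrimitive]
  ring

theorem mul_besselJ_neg_mul_besselJ {z : ℝ} (hz : 0 ≤ z) (σ : ℝ) :
    z * (besselJ (-σ) z * besselJ σ z) = z * (besselEntire (-σ) z * besselEntire σ z) := by
  rcases hz.eq_or_lt with rfl | hz
  · simp
  · rw [besselJ_mul_besselJ hz, neg_add_cancel, rpow_zero, mul_one]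

theorem intervalIntegrable_mul_besselJ_sq {σ μ : ℝ} (hσ : -1 < σ) (hμ : 0 ≤ μ) :
    IntervalIntegrable (fun z => z * besselJ σ z ^ 2) volume 0 μ := by
  refine intervalIntegral.intervalIntegrable_deriv_of_nonneg
    (continuous_besselJSqPrimitive hσ).continuousOn (fun z hz => ?_) (fun z hz => ?_)
  · rw [min_eq_left hμ] at hz
    exact hasDerivAt_besselJSqPrimitive hz.1 σ
  · rw [min_eq_left hμ] at hz
    exact mul_nonneg hz.1.le (sq_nonneg _)

theorem integral_mul_besselJ_sq {σ μ : ℝ} (hσ : -1 < σ) (hμ : 0 < μ) :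
    ∫ z in 0..μ, z * besselJ σ z ^ 2 = μ ^ 2 / 2 * (besselJ σ μ ^ 2 + besselJ (σ + 1) μ ^ 2)
      - σ * μ * (besselJ σ μ * besselJ (σ + 1) μ) := by
  rw [intervalIntegral.integral_eq_sub_of_hasDerivAt_of_le hμ.le
    (continuous_besselJSqPrimitive hσ).continuousOn
    (fun z hz => hasDerivAt_besselJSqPrimitive hz.1 σ) (intervalIntegrable_mul_besselJ_sq hσ hμ.le),
    besselJSqPrimitive_zero hσ, sub_zero, besselJSqPrimitive_eq hμ]

theorem intervalIntegrable_mul_besselJ_neg_mul_besselJ (σ : ℝ) {μ : ℝ} (hμ : 0 ≤ μ) :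
    IntervalIntegrable (fun z => z * (besselJ (-σ) z * besselJ σ z)) volume 0 μ := by
  refine (intervalIntegrable_congr fun z hz => ?_).mpr
    ((continuous_id.mul ((continuous_besselEntire (-σ)).mul
      (continuous_besselEntire σ))).intervalIntegrable 0 μ)
  rw [uIoc_of_le hμ] at hz
  exact mul_besselJ_neg_mul_besselJ hz.1.le σ

theorem integral_mul_besselJ_neg_mul_besselJ (σ : ℝ) {μ : ℝ} (hμ : 0 < μ) :
    ∫ z in 0..μ, z * (besselJ (-σ) z * besselJ σ z) = μ ^ 2 / 2 *
      (besselJ (-σ) μ * besselJ σ μ + besselJ (-σ + 1) μ * besselJ (σ + 1) μ) := by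
  rw [intervalIntegral.integral_eq_sub_of_hasDerivAt_of_le hμ.le
    (HasDerivAt.continuousOn fun z _ => hasDerivAt_besselJCrossPrimitive σ z)
    (fun z hz => (hasDerivAt_besselJCrossPrimitive σ z).congr_deriv
      (mul_besselJ_neg_mul_besselJ hz.1.le σ).symm)
    (intervalIntegrable_mul_besselJ_neg_mul_besselJ σ hμ.le), besselJCrossPrimitive_eq hμ]
  simp [besselJCrossPrimitive]

theorem integral_mul_comp_mul_left (f : ℝ → ℝ) {c : ℝ} (hc : c ≠ 0) (a b : ℝ) :
    ∫ x in a..b, x * f (c * x) = (c ^ 2)⁻¹ * ∫ z in c * a..c * b, z * f z := by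
  have h : ∀ x, x * f (c * x) = c⁻¹ * (c * x * f (c * x)) := fun x => by field_simp
  simp_rw [h]
  rw [intervalIntegral.integral_const_mul, intervalIntegral.integral_comp_mul_left
    (fun z => z * f z) hc, smul_eq_mul, ← mul_assoc, ← sq, inv_pow]

theorem stmt12_general (g : ℝ) (hg1 : 1/2 < g) (hg2 : g < 3/2)
    (μ : ℝ) (hμ : 0 < μ) (hJ : besselJ (1/2 - g) μ ≠ 0)
    (γN : ℝ) (hγN : γN = Real.pi / (2 * Real.cos (g * Real.pi) * besselJ (1/2 - g) μ)) :
    ∫ x in Ioc (0:ℝ) 1, γN * x *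
        (-(besselJ (g - 1/2) μ) * besselJ (1/2 - g) (μ * x)^2 +
          besselJ (1/2 - g) μ * besselJ (1/2 - g) (μ * x) * besselJ (g - 1/2) (μ * x)) =
      besselJ (3/2 - g) μ / (2 * μ * besselJ (1/2 - g) μ) := by
  obtain ⟨ν, rfl⟩ : ∃ ν, g = ν + 1 / 2 := ⟨g - 1 / 2, by ring⟩
  rw [show 1 / 2 - (ν + 1 / 2) = -ν by ring, show ν + 1 / 2 - 1 / 2 = ν by ring,
    show 3 / 2 - (ν + 1 / 2) = -ν + 1 by ring] at *
  have hcos : cos ((ν + 1 / 2) * π) = -sin (ν * π) := by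
    rw [add_mul, one_div_mul_eq_div, cos_add_pi_div_two]
  have hsin : sin (ν * π) ≠ 0 :=
    (sin_pos_of_pos_of_lt_pi (by nlinarith [pi_pos]) (by nlinarith [pi_pos])).ne'
  have hW := besselJ_wronskian hμ ν
  rw [mul_comm π ν, eq_div_iff pi_ne_zero] at hW
  have hsplit : ∀ z, z * (γN * (-besselJ ν μ * besselJ (-ν) z ^ 2 +
      besselJ (-ν) μ * besselJ (-ν) z * besselJ ν z)) =
      -γN * besselJ ν μ * (z * besselJ (-ν) z ^ 2) +
        γN * besselJ (-ν) μ * (z * (besselJ (-ν) z * besselJ ν z)) := fun z => by ring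
  have hLommel := integral_mul_comp_mul_left (fun z => γN * (-besselJ ν μ * besselJ (-ν) z ^ 2 +
    besselJ (-ν) μ * besselJ (-ν) z * besselJ ν z)) hμ.ne' 0 1
  simp only [mul_zero, mul_one, hsplit] at hLommel
  rw [intervalIntegral.integral_add
      ((intervalIntegrable_mul_besselJ_sq (by linarith) hμ.le).const_mul _)
      ((intervalIntegrable_mul_besselJ_neg_mul_besselJ ν hμ.le).const_mul _),
    intervalIntegral.integral_const_mul, intervalIntegral.integral_const_mul,
    integral_mul_besselJ_sq (by linarith) hμ, integral_mul_besselJ_neg_mul_besselJ ν hμ]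
    at hLommel
  rw [← intervalIntegral.integral_of_le zero_le_one]
  convert hLommel using 1
  · congr 1; ext x; ring
  rw [hγN, hcos]
  field_simp
  linear_combination -2 * besselJ (-ν + 1) μ * hW

theorem stmt12 (g : ℝ) (hg1 : 1/2 < g) (hg2 : g < 3/2) (hg3 : g ≠ 1)
    (μ : ℝ) (hμ : 0 < μ) (hJ : besselJ (1/2 - g) μ ≠ 0)
    (γN : ℝ) (hγN : γN = Real.pi / (2 * Real.cos (g * Real.pi) * besselJ (1/2 - g) μ)) :
    ∫ x in Ioc (0:ℝ) 1, γN * x *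
        (-(besselJ (g - 1/2) μ) * besselJ (1/2 - g) (μ * x)^2 +
          besselJ (1/2 - g) μ * besselJ (1/2 - g) (μ * x) * besselJ (g - 1/2) (μ * x)) =
      besselJ (3/2 - g) μ / (2 * μ * besselJ (1/2 - g) μ) :=
  stmt12_general g hg1 hg2 μ hμ hJ γN hγN
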